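/- For a probability measure $\mu$ and fixed $q > 0$, the function $f(p) = \frac{spq}{(q-p)(s-2p)}$ satisfies $f'(p) = \frac{sq(sq-2p^2)}{(q-p)^2(s-2p)^2} > 0$ whenever $0 < p < q$ and $s > 2p$; consequently the $(p,q)$-Wasserstein dimension is non-decreasing in $p$: if $0 < p_1 \le p_2 < q$ then $d^\star_{p_1,q}(\mu) \le d^\star_{p_2,q}(\mu)$. -/

import Mathlib

open MeasureTheory Filter ENNReal

/-- The `ε`-covering number of a set `S`: the minimal number of `ε`-balls (with arbitrary
centers) needed to cover `S`. -/
noncomputable def covNum {X : Type*} [MetricSpace X] (ε : ℝ) (S : Set X) : ℝ≥0∞ :=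
  ⨅ (C : Finset X) (_ : S ⊆ ⋃ x ∈ C, Metric.ball x ε), (C.card : ℝ≥0∞)

/-- The `(ε, τ)`-covering number of a measure `μ`: the minimal `ε`-covering number over sets
of `μ`-measure at least `1 - τ`. -/
noncomputable def measCovNum {X : Type*} [MetricSpace X] [MeasurableSpace X]
    (μ : Measure X) (ε τ : ℝ) : ℝ≥0∞ :=
  ⨅ (S : Set X) (_ : ENNReal.ofReal (1 - τ) ≤ μ S), covNum ε S

/-- The defining set of the `(p,q)`-Wasserstein dimension. -/
noncomputable def wassersteinDimSet {X : Type*} [MetricSpace X] [MeasurableSpace X]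
    (μ : Measure X) (p q : ℝ) : Set ℝ :=
  {s | 2 * p < s ∧
    Filter.limsup
      (fun ε : ℝ =>
        Real.log (measCovNum μ ε (ε ^ (s * p * q / ((q - p) * (s - 2 * p))))).toReal /
          Real.log (1 / ε))
      (nhdsWithin 0 (Set.Ioi 0)) ≤ s}

/-- The `(p,q)`-Wasserstein dimension `d⋆_{p,q}(μ)`. -/
noncomputable def dStar {X : Type*} [MetricSpace X] [MeasurableSpace X]
    (μ : Measure X) (p q : ℝ) : ℝ :=
  sInf (wassersteinDimSet μ p q)

open Topology

/-!
Write `a(p, s) = s p q / ((q - p)(s - 2p))` for the exponent of the mass threshold `τ = ε ^ a`.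
It increases with `p` (its derivative is positive) and decreases with `s`, while a larger
exponent means a smaller `τ` and hence a larger covering number. So every `s` admissible for
`p₂` is admissible for `p₁ ≤ p₂`, except when the real `limsup` of the covering rate takes the
junk value `0` (unbounded rate, or infinite covering numbers); in that case the smaller `s'` with
`a(p₁, s') = a(p₂, s)` sees the same junk value `0 ≤ s'`.
-/

noncomputable def coverageExponent (p q s : ℝ) : ℝ :=
  s * p * q / ((q - p) * (s - 2 * p))

section CoverageExponent

variable {p q s : ℝ}

theorem hasDerivAt_coverageExponent (hpq : p < q) (hs : 2 * p < s) :
    HasDerivAt (fun p => coverageExponent p q s)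
      (s * q * (s * q - 2 * p ^ 2) / ((q - p) ^ 2 * (s - 2 * p) ^ 2)) p := by
  have hqp : q - p ≠ 0 := by linarith
  have hsp : s - 2 * p ≠ 0 := by linarith
  have hnum : HasDerivAt (fun p => s * p * q) (s * q) p := by
    simpa using ((hasDerivAt_id p).const_mul s).mul_const q
  have hfst : HasDerivAt (fun p => q - p) (-1) p := by simpa using (hasDerivAt_id p).const_sub q
  have hsnd : HasDerivAt (fun p => s - 2 * p) (-2) p := by
    simpa using ((hasDerivAt_id p).const_mul 2).const_sub s
  have hden : HasDerivAt (fun p => (q - p) * (s - 2 * p)) (-1 * (s - 2 * p) + (q - p) * -2) p :=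
    hfst.mul hsnd
  refine (hnum.div hden (mul_ne_zero hqp hsp)).congr_deriv ?_
  field_simp
  ring

theorem coverageExponent_derivative_pos (hp : 0 < p) (hpq : p < q) (hs : 2 * p < s) :
    0 < s * q * (s * q - 2 * p ^ 2) / ((q - p) ^ 2 * (s - 2 * p) ^ 2) := by
  have hsq : 2 * p ^ 2 < s * q := by nlinarith
  have hqp : 0 < q - p := by linarith
  have hsp : 0 < s - 2 * p := by linarith
  have : 0 < s * q := by nlinarith
  positivity

theorem strictMonoOn_coverageExponent :
    StrictMonoOn (fun p => coverageExponent p q s) (Set.Ioo 0 (min q (s / 2))) := by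
  have hD : ∀ p ∈ Set.Ioo 0 (min q (s / 2)), 0 < p ∧ p < q ∧ 2 * p < s := fun p hp => by
    obtain ⟨hp0, hpmin⟩ := hp
    rw [lt_min_iff] at hpmin
    exact ⟨hp0, hpmin.1, by linarith⟩
  refine strictMonoOn_of_hasDerivWithinAt_pos (convex_Ioo _ _)
    (f' := fun p => s * q * (s * q - 2 * p ^ 2) / ((q - p) ^ 2 * (s - 2 * p) ^ 2))
    (fun p hp => (hasDerivAt_coverageExponent (hD p hp).2.1 (hD p hp).2.2).continuousAt
      |>.continuousWithinAt) (fun p hp => ?_) (fun p hp => ?_)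
  all_goals
    rw [interior_Ioo] at hp
    obtain ⟨hp0, hpq, hs⟩ := hD p hp
  · exact (hasDerivAt_coverageExponent hpq hs).hasDerivWithinAt
  · exact coverageExponent_derivative_pos hp0 hpq hs

theorem coverageExponent_le_of_le {p₁ p₂ : ℝ} (hp₁ : 0 < p₁) (h12 : p₁ ≤ p₂) (h2q : p₂ < q)
    (hs : 2 * p₂ < s) : coverageExponent p₁ q s ≤ coverageExponent p₂ q s :=
  strictMonoOn_coverageExponent.monotoneOn
    ⟨hp₁, lt_min (by linarith) (by linarith)⟩ ⟨hp₁.trans_le h12, lt_min h2q (by linarith)⟩ h12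

theorem strictAntiOn_coverageExponent (hp : 0 < p) (hpq : p < q) :
    StrictAntiOn (coverageExponent p q) (Set.Ioi (2 * p)) := by
  intro s (hs : 2 * p < s) t (ht : 2 * p < t) hst
  have hqp : 0 < q - p := by linarith
  rw [coverageExponent, coverageExponent,
    div_lt_div_iff₀ (mul_pos hqp (by linarith)) (mul_pos hqp (by linarith))]
  have : 0 < p * q * (q - p) * (2 * p) * (t - s) :=
    mul_pos (mul_pos (mul_pos (mul_pos hp (hp.trans hpq)) hqp) (by linarith)) (sub_pos.2 hst)
  linear_combination this

theorem lt_coverageExponent (hp : 0 < p) (hpq : p < q) (hs : 2 * p < s) :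
    p * q / (q - p) < coverageExponent p q s := by
  have hqp : 0 < q - p := by linarith
  have hsp : 0 < s - 2 * p := by linarith
  rw [coverageExponent, div_lt_div_iff₀ hqp (mul_pos hqp hsp)]
  have : 0 < p * q * (q - p) * (2 * p) :=
    mul_pos (mul_pos (mul_pos hp (hp.trans hpq)) hqp) (by linarith)
  linear_combination this

theorem coverageExponent_pos (hp : 0 < p) (hpq : p < q) (hs : 2 * p < s) :
    0 < coverageExponent p q s :=
  (div_pos (mul_pos hp (hp.trans hpq)) (by linarith)).trans (lt_coverageExponent hp hpq hs)

theorem exists_coverageExponent_eq {a : ℝ} (hp : 0 < p) (hpq : p < q) (ha : p * q / (q - p) < a) :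
    ∃ s, 2 * p < s ∧ coverageExponent p q s = a := by
  have hqp : 0 < q - p := by linarith
  have hD : 0 < a * (q - p) - p * q := by rw [div_lt_iff₀ hqp] at ha; linarith
  -- solve `s p q = a (q - p) (s - 2p)` for `s`
  refine ⟨2 * p * a * (q - p) / (a * (q - p) - p * q), ?_, ?_⟩
  · rw [lt_div_iff₀ hD]
    nlinarith [mul_pos (mul_pos hp hp) (hp.trans hpq)]
  · have := (hp.trans hpq).ne'
    rw [coverageExponent]
    field_simp
    ring

end CoverageExponent

section CoveringNumbers

variable {X : Type*} [MetricSpace X]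

theorem covNum_anti {ε ε' : ℝ} (h : ε ≤ ε') (S : Set X) : covNum ε' S ≤ covNum ε S :=
  le_iInf₂ fun C hC =>
    iInf₂_le C (hC.trans (Set.iUnion₂_mono fun _ _ => Metric.ball_subset_ball h))

theorem one_le_covNum {ε : ℝ} {S : Set X} (hS : S.Nonempty) : 1 ≤ covNum ε S := by
  refine le_iInf₂ fun C hC => ?_
  obtain ⟨x, hx⟩ := hS
  obtain ⟨y, hy, -⟩ := Set.mem_iUnion₂.1 (hC hx)
  exact_mod_cast Finset.card_pos.mpr ⟨y, hy⟩

variable [MeasurableSpace X] (μ : Measure X)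

theorem measCovNum_anti {ε ε' τ τ' : ℝ} (hε : ε ≤ ε') (hτ : τ ≤ τ') :
    measCovNum μ ε' τ' ≤ measCovNum μ ε τ :=
  le_iInf₂ fun S hS =>
    (iInf₂_le S ((ENNReal.ofReal_le_ofReal (by linarith)).trans hS)).trans (covNum_anti hε S)

theorem one_le_measCovNum {ε τ : ℝ} (hτ : τ < 1) : 1 ≤ measCovNum μ ε τ := by
  refine le_iInf₂ fun S hS => one_le_covNum (Set.nonempty_iff_ne_empty.2 ?_)
  rintro rfl
  simp only [measure_empty, nonpos_iff_eq_zero, ENNReal.ofReal_eq_zero] at hS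
  linarith

noncomputable def covRate (a ε : ℝ) : ℝ :=
  Real.log (measCovNum μ ε (ε ^ a)).toReal / Real.log (1 / ε)

noncomputable def upperCovRate (a : ℝ) : ℝ :=
  limsup (covRate μ a) (𝓝[>] 0)

theorem mem_wassersteinDimSet {p q s : ℝ} :
    s ∈ wassersteinDimSet μ p q ↔ 2 * p < s ∧ upperCovRate μ (coverageExponent p q s) ≤ s :=
  Iff.rfl

variable {μ}

theorem covRate_nonneg {a ε : ℝ} (ha : 0 < a) (hε0 : 0 < ε) (hε1 : ε < 1) :
    0 ≤ covRate μ a ε := by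
  refine div_nonneg ?_ (Real.log_nonneg ((one_le_div hε0).2 hε1.le))
  rcases eq_or_ne (measCovNum μ ε (ε ^ a)) ⊤ with htop | htop
  · simp [htop]
  · refine Real.log_nonneg ?_
    simpa using ENNReal.toReal_mono htop (one_le_measCovNum μ (Real.rpow_lt_one hε0.le hε1 ha))

theorem covRate_mono {a a' ε : ℝ} (ha' : 0 < a') (haa : a' ≤ a) (hε0 : 0 < ε) (hε1 : ε < 1)
    (hfin : measCovNum μ ε (ε ^ a) ≠ ⊤) : covRate μ a' ε ≤ covRate μ a ε := by
  have hN : measCovNum μ ε (ε ^ a') ≤ measCovNum μ ε (ε ^ a) :=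
    measCovNum_anti μ le_rfl (Real.rpow_le_rpow_of_exponent_ge hε0 hε1.le haa)
  have hN1 : 1 ≤ (measCovNum μ ε (ε ^ a')).toReal := by
    simpa using ENNReal.toReal_mono (ne_top_of_le_ne_top hfin hN)
      (one_le_measCovNum μ (Real.rpow_lt_one hε0.le hε1 ha'))
  exact div_le_div_of_nonneg_right
    (Real.log_le_log (by linarith) (ENNReal.toReal_mono hfin hN))
    (Real.log_nonneg ((one_le_div hε0).2 hε1.le))

theorem upperCovRate_eq_zero_of_measCovNum_eq_top {a ε₀ : ℝ} (ha : 0 ≤ a) (hε₀ : 0 < ε₀)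
    (htop : measCovNum μ ε₀ (ε₀ ^ a) = ⊤) : upperCovRate μ a = 0 := by
  have hzero : covRate μ a =ᶠ[𝓝[>] 0] fun _ => 0 := by
    filter_upwards [Ioo_mem_nhdsGT hε₀] with ε ⟨hε0, hεε₀⟩
    have := measCovNum_anti μ hεε₀.le (Real.rpow_le_rpow hε0.le hεε₀.le ha)
    simp [covRate, top_le_iff.1 (htop ▸ this)]
  rw [upperCovRate, limsup_congr hzero, limsup_const]

variable (μ) in
/-- The alternative `upperCovRate μ a = 0` covers the junk values of the real `limsup` and of
`ENNReal.toReal ⊤`, where monotonicity in the exponent can fail. -/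
theorem upperCovRate_le_or_eq_zero {a a' : ℝ} (ha' : 0 < a') (haa : a' ≤ a) :
    upperCovRate μ a' ≤ upperCovRate μ a ∨ upperCovRate μ a = 0 := by
  by_cases htop : ∃ ε₀, 0 < ε₀ ∧ measCovNum μ ε₀ (ε₀ ^ a) = ⊤
  · obtain ⟨ε₀, hε₀, htop⟩ := htop
    exact Or.inr (upperCovRate_eq_zero_of_measCovNum_eq_top (ha'.le.trans haa) hε₀ htop)
  push Not at htop
  by_cases hbdd : IsBoundedUnder (· ≤ ·) (𝓝[>] 0) (covRate μ a)
  · refine Or.inl (limsup_le_limsup ?_ (isCoboundedUnder_le_of_eventually_le _ (x := 0) ?_) hbdd)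
    · filter_upwards [Ioo_mem_nhdsGT one_pos] with ε ⟨hε0, hε1⟩
      exact covRate_mono ha' haa hε0 hε1 (htop ε hε0)
    · filter_upwards [Ioo_mem_nhdsGT one_pos] with ε ⟨hε0, hε1⟩
      exact covRate_nonneg ha' hε0 hε1
  · exact Or.inr (Real.limsup_of_not_isBoundedUnder hbdd)

end CoveringNumbers

section WassersteinDimension

variable {X : Type*} [MetricSpace X] [MeasurableSpace X] (μ : Measure X) {p q : ℝ}

theorem wassersteinDimSet_bddBelow : BddBelow (wassersteinDimSet μ p q) :=
  ⟨2 * p, fun _ hs => hs.1.le⟩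

theorem wassersteinDimSet_nonempty (hp : 0 < p) (hpq : p < q) :
    (wassersteinDimSet μ p q).Nonempty := by
  set a := coverageExponent p q (2 * p + 1)
  set u := max (2 * p + 1) (upperCovRate μ a)
  have hu : 2 * p < u := by linarith [le_max_left (2 * p + 1) (upperCovRate μ a)]
  have hexp : coverageExponent p q u ≤ a :=
    (strictAntiOn_coverageExponent hp hpq).antitoneOn (by simp) hu (le_max_left _ _)
  rcases upperCovRate_le_or_eq_zero μ (coverageExponent_pos hp hpq hu) hexp with h | h
  · exact ⟨u, (mem_wassersteinDimSet μ).2 ⟨hu, h.trans (le_max_right _ _)⟩⟩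
  · exact ⟨2 * p + 1, (mem_wassersteinDimSet μ).2 ⟨by linarith, by rw [h]; linarith⟩⟩

theorem exists_mem_wassersteinDimSet_le {p₁ p₂ s : ℝ} (hp₁ : 0 < p₁) (h12 : p₁ ≤ p₂)
    (h2q : p₂ < q) (hs : s ∈ wassersteinDimSet μ p₂ q) :
    ∃ s' ≤ s, s' ∈ wassersteinDimSet μ p₁ q := by
  obtain ⟨hs2, hsL⟩ := (mem_wassersteinDimSet μ).1 hs
  have hs1 : 2 * p₁ < s := by linarith
  have h1q : p₁ < q := by linarith
  have hle := coverageExponent_le_of_le hp₁ h12 h2q hs2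
  rcases upperCovRate_le_or_eq_zero μ (coverageExponent_pos hp₁ h1q hs1) hle with h | h
  · exact ⟨s, le_rfl, (mem_wassersteinDimSet μ).2 ⟨hs1, h.trans hsL⟩⟩
  · obtain ⟨s', hs'1, hs'a⟩ :=
      exists_coverageExponent_eq hp₁ h1q ((lt_coverageExponent hp₁ h1q hs1).trans_le hle)
    refine ⟨s', ?_, (mem_wassersteinDimSet μ).2 ⟨hs'1, by rw [hs'a, h]; linarith⟩⟩
    exact ((strictAntiOn_coverageExponent hp₁ h1q).le_iff_ge hs1 hs'1).1 (hs'a ▸ hle)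

theorem dStar_le_dStar {p₁ p₂ : ℝ} (hp₁ : 0 < p₁) (h12 : p₁ ≤ p₂) (h2q : p₂ < q) :
    dStar μ p₁ q ≤ dStar μ p₂ q :=
  le_csInf (wassersteinDimSet_nonempty μ (hp₁.trans_le h12) h2q) fun _ hs =>
    let ⟨_, hs', hmem⟩ := exists_mem_wassersteinDimSet_le μ hp₁ h12 h2q hs
    (csInf_le (wassersteinDimSet_bddBelow μ) hmem).trans hs'

end WassersteinDimension

theorem dStar_monotone_in_p_general {X : Type*} [MetricSpace X] [MeasurableSpace X]
    (μ : Measure X) (q : ℝ) :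
    (∀ p s : ℝ, 0 < p → p < q → 2 * p < s →
      HasDerivAt (fun p' : ℝ => s * p' * q / ((q - p') * (s - 2 * p')))
        (s * q * (s * q - 2 * p ^ 2) / ((q - p) ^ 2 * (s - 2 * p) ^ 2)) p ∧
      0 < s * q * (s * q - 2 * p ^ 2) / ((q - p) ^ 2 * (s - 2 * p) ^ 2)) ∧
    (∀ p₁ p₂ : ℝ, 0 < p₁ → p₁ ≤ p₂ → p₂ < q → dStar μ p₁ q ≤ dStar μ p₂ q) :=
  ⟨fun _ _ hp hpq hs =>
    ⟨hasDerivAt_coverageExponent hpq hs, coverageExponent_derivative_pos hp hpq hs⟩,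
   fun _ _ hp₁ h12 h2q => dStar_le_dStar μ hp₁ h12 h2q⟩

/-- **Monotonicity in `p`:** the map `p ↦ s p q / ((q-p)(s-2p))` has positive derivative
`s q (s q - 2p²)/((q-p)²(s-2p)²)` for `0 < p < q`, `s > 2p`; consequently the
`(p,q)`-Wasserstein dimension is non-decreasing in `p`. -/
theorem dStar_monotone_in_p {X : Type*} [MetricSpace X] [MeasurableSpace X]
    (μ : Measure X) [IsProbabilityMeasure μ] (q : ℝ) (hq : 0 < q) :
    (∀ p s : ℝ, 0 < p → p < q → 2 * p < s →
      HasDerivAt (fun p' : ℝ => s * p' * q / ((q - p') * (s - 2 * p')))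
        (s * q * (s * q - 2 * p ^ 2) / ((q - p) ^ 2 * (s - 2 * p) ^ 2)) p ∧
      0 < s * q * (s * q - 2 * p ^ 2) / ((q - p) ^ 2 * (s - 2 * p) ^ 2)) ∧
    (∀ p₁ p₂ : ℝ, 0 < p₁ → p₁ ≤ p₂ → p₂ < q → dStar μ p₁ q ≤ dStar μ p₂ q) :=
  dStar_monotone_in_p_general μ q
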